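/- Let μ > 0, let σ^r ∈ Δ^n × Δ^m be any reference profile, and let σ̂ = (x̂, ŷ) be a saddle point of the corresponding SCCP. Then the exploitability of σ̂ satisfies ε(σ̂) ≤ 2μ. -/

import Mathlib

open Finset

/-- Squared Euclidean norm of a vector. -/
noncomputable def sqnorm {k : ℕ} (v : Fin k → ℝ) : ℝ := ∑ i, (v i) ^ 2

/-- Euclidean norm of a concatenated profile vector in ℝ^(k+l). -/
noncomputable def pnorm {k l : ℕ} (v : Fin k → ℝ) (w : Fin l → ℝ) : ℝ :=
  Real.sqrt (sqnorm v + sqnorm w)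

/-- Bilinear payoff xᵀUy. -/
def payoff {k l : ℕ} (U : Matrix (Fin k) (Fin l) ℝ) (x : Fin k → ℝ) (y : Fin l → ℝ) : ℝ :=
  ∑ i, ∑ j, x i * U i j * y j

/-- Regularized SCCP objective G(x,y) = -xᵀUy + μ/2 ‖x - xʳ‖² - μ/2 ‖y - yʳ‖². -/
noncomputable def sccpObj {k l : ℕ} (U : Matrix (Fin k) (Fin l) ℝ) (μ : ℝ)
    (xr : Fin k → ℝ) (yr : Fin l → ℝ) (x : Fin k → ℝ) (y : Fin l → ℝ) : ℝ :=
  -(payoff U x y) + μ / 2 * sqnorm (x - xr) - μ / 2 * sqnorm (y - yr)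

/-- (x̂, ŷ) is a saddle point of the SCCP with weight μ and reference (xr, yr). -/
def IsSaddle {k l : ℕ} (U : Matrix (Fin k) (Fin l) ℝ) (μ : ℝ)
    (xr : Fin k → ℝ) (yr : Fin l → ℝ) (xh : Fin k → ℝ) (yh : Fin l → ℝ) : Prop :=
  xh ∈ stdSimplex ℝ (Fin k) ∧ yh ∈ stdSimplex ℝ (Fin l) ∧
  (∀ y ∈ stdSimplex ℝ (Fin l), sccpObj U μ xr yr xh y ≤ sccpObj U μ xr yr xh yh) ∧
  (∀ x ∈ stdSimplex ℝ (Fin k), sccpObj U μ xr yr xh yh ≤ sccpObj U μ xr yr x yh)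

/-- (x*, y*) is a Nash equilibrium of the zero-sum game with payoff matrix U. -/
def IsNash {k l : ℕ} (U : Matrix (Fin k) (Fin l) ℝ)
    (xs : Fin k → ℝ) (ys : Fin l → ℝ) : Prop :=
  xs ∈ stdSimplex ℝ (Fin k) ∧ ys ∈ stdSimplex ℝ (Fin l) ∧
  (∀ x ∈ stdSimplex ℝ (Fin k), payoff U x ys ≤ payoff U xs ys) ∧
  (∀ y ∈ stdSimplex ℝ (Fin l), payoff U xs ys ≤ payoff U xs y)

/-- Exploitability ε(σ) = max_{x'} x'ᵀUy - min_{y'} xᵀUy'. -/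
noncomputable def exploit {k l : ℕ} (U : Matrix (Fin k) (Fin l) ℝ)
    (x : Fin k → ℝ) (y : Fin l → ℝ) : ℝ :=
  sSup ((fun x' => payoff U x' y) '' stdSimplex ℝ (Fin k)) -
  sInf ((fun y' => payoff U x y') '' stdSimplex ℝ (Fin l))

/-- Transformed loss for the x-player: ℓ_x = -Uy + μ(x - xʳ). -/
noncomputable def lossX {k l : ℕ} (U : Matrix (Fin k) (Fin l) ℝ) (μ : ℝ)
    (xr : Fin k → ℝ) (x : Fin k → ℝ) (y : Fin l → ℝ) : Fin k → ℝ :=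
  fun i => -(∑ j, U i j * y j) + μ * (x i - xr i)

/-- Transformed loss for the y-player: ℓ_y = Uᵀx + μ(y - yʳ). -/
noncomputable def lossY {k l : ℕ} (U : Matrix (Fin k) (Fin l) ℝ) (μ : ℝ)
    (yr : Fin l → ℝ) (x : Fin k → ℝ) (y : Fin l → ℝ) : Fin l → ℝ :=
  fun j => (∑ i, U i j * x i) + μ * (y j - yr j)

/-- Immediate regret r = ⟨ℓ, p⟩·𝟏 - ℓ. -/
noncomputable def imRegret {k : ℕ} (ℓ : Fin k → ℝ) (p : Fin k → ℝ) : Fin k → ℝ :=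
  fun i => (∑ i', ℓ i' * p i') - ℓ i

/-!
A unilateral deviation from the saddle point changes the bilinear part of `G` by at most the
change of the deviator's regularizer, `μ/2 · ‖x' - xʳ‖² - μ/2 · ‖x̂ - xʳ‖² ≤ μ/2 · 2`, because
the squared distance between two points of a simplex is at most `2`. Hence neither player gains
more than `μ` by deviating, and the exploitability is at most `2μ`.
-/

lemma sqnorm_nonneg {k : ℕ} (v : Fin k → ℝ) : 0 ≤ sqnorm v :=
  sum_nonneg fun _ _ => sq_nonneg _

lemma sqnorm_le_one_of_mem_stdSimplex {k : ℕ} {v : Fin k → ℝ} (hv : v ∈ stdSimplex ℝ (Fin k)) :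
    sqnorm v ≤ 1 := by
  calc sqnorm v ≤ ∑ i, v i := by
        refine sum_le_sum fun i _ => ?_
        have hle : v i ≤ 1 := hv.2 ▸ single_le_sum (fun j _ => hv.1 j) (mem_univ i)
        nlinarith [hv.1 i]
    _ = 1 := hv.2

lemma sqnorm_sub_le_add_of_nonneg {k : ℕ} {v w : Fin k → ℝ} (hv : 0 ≤ v) (hw : 0 ≤ w) :
    sqnorm (v - w) ≤ sqnorm v + sqnorm w := by
  rw [sqnorm, sqnorm, sqnorm, ← sum_add_distrib]
  refine sum_le_sum fun i _ => ?_
  rw [Pi.sub_apply]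
  nlinarith [mul_nonneg (hv i : 0 ≤ v i) (hw i : 0 ≤ w i)]

lemma sqnorm_sub_le_two_of_mem_stdSimplex {k : ℕ} {v w : Fin k → ℝ}
    (hv : v ∈ stdSimplex ℝ (Fin k)) (hw : w ∈ stdSimplex ℝ (Fin k)) :
    sqnorm (v - w) ≤ 2 := by
  have := sqnorm_sub_le_add_of_nonneg hv.1 hw.1
  linarith [sqnorm_le_one_of_mem_stdSimplex hv, sqnorm_le_one_of_mem_stdSimplex hw]

section Saddle

variable {n m : ℕ} {U : Matrix (Fin n) (Fin m) ℝ} {μ : ℝ} {xr xh : Fin n → ℝ} {yr yh : Fin m → ℝ}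

lemma IsSaddle.payoff_le (hsad : IsSaddle U μ xr yr xh yh) (hμ : 0 ≤ μ)
    (hxr : xr ∈ stdSimplex ℝ (Fin n)) {x : Fin n → ℝ} (hx : x ∈ stdSimplex ℝ (Fin n)) :
    payoff U x yh ≤ payoff U xh yh + μ := by
  have hG := hsad.2.2.2 x hx
  have hreg : μ / 2 * sqnorm (x - xr) ≤ μ / 2 * 2 :=
    mul_le_mul_of_nonneg_left (sqnorm_sub_le_two_of_mem_stdSimplex hx hxr) (by positivity)
  have hreg_nonneg : 0 ≤ μ / 2 * sqnorm (xh - xr) :=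
    mul_nonneg (by positivity) (sqnorm_nonneg _)
  simp only [sccpObj] at hG
  linarith

lemma IsSaddle.le_payoff (hsad : IsSaddle U μ xr yr xh yh) (hμ : 0 ≤ μ)
    (hyr : yr ∈ stdSimplex ℝ (Fin m)) {y : Fin m → ℝ} (hy : y ∈ stdSimplex ℝ (Fin m)) :
    payoff U xh yh - μ ≤ payoff U xh y := by
  have hG := hsad.2.2.1 y hy
  have hreg : μ / 2 * sqnorm (y - yr) ≤ μ / 2 * 2 :=
    mul_le_mul_of_nonneg_left (sqnorm_sub_le_two_of_mem_stdSimplex hy hyr) (by positivity)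
  have hreg_nonneg : 0 ≤ μ / 2 * sqnorm (yh - yr) :=
    mul_nonneg (by positivity) (sqnorm_nonneg _)
  simp only [sccpObj] at hG
  linarith

end Saddle

lemma exploit_le_of_forall_payoff {n m : ℕ} {U : Matrix (Fin n) (Fin m) ℝ}
    {x : Fin n → ℝ} {y : Fin m → ℝ} (hx : x ∈ stdSimplex ℝ (Fin n))
    (hy : y ∈ stdSimplex ℝ (Fin m)) {a b : ℝ}
    (hmax : ∀ x' ∈ stdSimplex ℝ (Fin n), payoff U x' y ≤ a)
    (hmin : ∀ y' ∈ stdSimplex ℝ (Fin m), b ≤ payoff U x y') :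
    exploit U x y ≤ a - b := by
  have hsup : sSup ((fun x' => payoff U x' y) '' stdSimplex ℝ (Fin n)) ≤ a :=
    csSup_le ⟨_, x, hx, rfl⟩ (by rintro _ ⟨x', hx', rfl⟩; exact hmax x' hx')
  have hinf : b ≤ sInf ((fun y' => payoff U x y') '' stdSimplex ℝ (Fin m)) :=
    le_csInf ⟨_, y, hy, rfl⟩ (by rintro _ ⟨y', hy', rfl⟩; exact hmin y' hy')
  exact sub_le_sub hsup hinf

theorem exploitability_le_two_mu_general
    {n m : ℕ}
    (U : Matrix (Fin n) (Fin m) ℝ) (μ : ℝ) (hμ : 0 < μ)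
    (xr : Fin n → ℝ) (yr : Fin m → ℝ)
    (hxr : xr ∈ stdSimplex ℝ (Fin n)) (hyr : yr ∈ stdSimplex ℝ (Fin m))
    (xh : Fin n → ℝ) (yh : Fin m → ℝ)
    (hsad : IsSaddle U μ xr yr xh yh) :
    exploit U xh yh ≤ 2 * μ := by
  calc exploit U xh yh ≤ (payoff U xh yh + μ) - (payoff U xh yh - μ) :=
        exploit_le_of_forall_payoff hsad.1 hsad.2.1
          (fun _ hx => hsad.payoff_le hμ.le hxr hx) (fun _ hy => hsad.le_payoff hμ.le hyr hy)
    _ = 2 * μ := by ring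

/-- The exploitability of the SCCP saddle point is at most 2μ. -/
theorem exploitability_le_two_mu
    {n m : ℕ} (hn : 0 < n) (hm : 0 < m)
    (U : Matrix (Fin n) (Fin m) ℝ) (μ : ℝ) (hμ : 0 < μ)
    (hNE : ∃ xs ys, IsNash U xs ys)
    (xr : Fin n → ℝ) (yr : Fin m → ℝ)
    (hxr : xr ∈ stdSimplex ℝ (Fin n)) (hyr : yr ∈ stdSimplex ℝ (Fin m))
    (xh : Fin n → ℝ) (yh : Fin m → ℝ)
    (hsad : IsSaddle U μ xr yr xh yh) :
    exploit U xh yh ≤ 2 * μ :=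
  exploitability_le_two_mu_general U μ hμ xr yr hxr hyr xh yh hsad
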